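/- The function S₃(t,x) = η₃(t)·x + c₃(t), with η₃(t) = 2(e^{4-t} - e^{t-2})/(e^2+1) and c₃(t) = (4e^2(t-3) + 5(e^{2t-4} - e^{8-2t}))/(2(e^2+1)^2), satisfies ∂S₃/∂t (t, x*(t)) - (x*(t))² = 0 for all t ∈ [2,3], where x*(t) = (e^{t-2} + e^{4-t})/(e^2+1). -/

import Mathlib

open Real

noncomputable def eta3 (t : ℝ) : ℝ := 2 * (exp (4 - t) - exp (t - 2)) / (exp 2 + 1)

noncomputable def c3 (t : ℝ) : ℝ :=
  (4 * exp 2 * (t - 3) + 5 * (exp (2 * t - 4) - exp (8 - 2 * t))) / (2 * (exp 2 + 1) ^ 2)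

noncomputable def xstar23 (t : ℝ) : ℝ := (exp (t - 2) + exp (4 - t)) / (exp 2 + 1)

/-- The function S₃(t,x) = η₃(t)x + c₃(t) verifies the Hamilton–Jacobi equation
along the optimal trajectory on (2,3):
∂₁S₃(t,x*(t)) - x*(t)² + η₃(t)·u*(t-2) = 0,
i.e. the t-partial derivative of S₃ at (t, x*(t)) equals
x*(t)² - η₃(t)·(e^{t-2}-e^{4-t})/(e²+1). -/
theorem S3_solves_HJ :
    ∀ t ∈ Set.Ioo (2 : ℝ) 3,
      HasDerivAt (fun τ : ℝ => eta3 τ * xstar23 t + c3 τ)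
        (xstar23 t ^ 2 - eta3 t * ((exp (t - 2) - exp (4 - t)) / (exp 2 + 1))) t := by
  intro t _
  have hE : exp 2 + 1 ≠ 0 := by positivity
  have hb : HasDerivAt (fun τ : ℝ => exp (4 - τ)) (-exp (4 - t)) t := by
    simpa using (((hasDerivAt_id t).const_sub 4).exp)
  have ha : HasDerivAt (fun τ : ℝ => exp (τ - 2)) (exp (t - 2)) t := by
    simpa using (((hasDerivAt_id t).sub_const 2).exp)
  have hb2 : HasDerivAt (fun τ : ℝ => exp (8 - 2 * τ)) (-2 * exp (8 - 2 * t)) t := by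
    have : HasDerivAt (fun τ : ℝ => (8 : ℝ) - 2 * τ) (-2) t := by
      simpa using (((hasDerivAt_id t).const_mul 2).const_sub 8)
    simpa [mul_comm] using this.exp
  have ha2 : HasDerivAt (fun τ : ℝ => exp (2 * τ - 4)) (2 * exp (2 * t - 4)) t := by
    have : HasDerivAt (fun τ : ℝ => 2 * τ - (4 : ℝ)) 2 t := by
      simpa using (((hasDerivAt_id t).const_mul 2).sub_const 4)
    simpa [mul_comm] using this.exp
  have heta : HasDerivAt eta3 (2 * (-exp (4 - t) - exp (t - 2)) / (exp 2 + 1)) t := by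
    unfold eta3
    exact (((hb.sub ha).const_mul 2).div_const _)
  have hc : HasDerivAt c3
      ((4 * exp 2 + 5 * (2 * exp (2 * t - 4) - (-2 * exp (8 - 2 * t)))) /
        (2 * (exp 2 + 1) ^ 2)) t := by
    unfold c3
    have h1 : HasDerivAt (fun τ : ℝ => 4 * exp 2 * (τ - 3)) (4 * exp 2) t := by
      simpa using ((hasDerivAt_id t).sub_const 3).const_mul (4 * exp 2)
    exact ((h1.add ((ha2.sub hb2).const_mul 5)).div_const _)
  have hsum := (heta.mul_const (xstar23 t)).add hc
  refine hsum.congr_deriv ?_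
  unfold eta3 xstar23
  rw [show (2 * t - 4 : ℝ) = (t - 2) + (t - 2) by ring,
      show (8 - 2 * t : ℝ) = (4 - t) + (4 - t) by ring,
      show (2 : ℝ) = (t - 2) + (4 - t) by ring, exp_add, exp_add, exp_add]
  have h0 : exp (t - 2) * exp (4 - t) + 1 ≠ 0 := by positivity
  field_simp
  ring
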